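/- Let X be a metric space exhausted by an increasing sequence of compact sets K₀ ⊆ K₁ ⊆ ⋯ with K_{i-1} contained in the interior of K_i, and let f : X → ℂⁿ be a map inducing a pseudometric dist_f on X. Suppose there are positive reals εᵢ with dist_f(K_{i-1}, X \ K_i) > 1/(2ε_{i-1}) for every i ≥ 1, where dist_f(A, B) = inf{dist_f(x,y) : x ∈ A, y ∈ B}, and suppose Σᵢ 1/εᵢ = ∞ with εᵢ decreasing satisfying ε_{i+1} < εᵢ/2. Then every divergent path in X (a path eventually leaving every compact K_i) has infinite length with respect to dist_f; i.e., the pseudometric dist_f is complete in the sense that dist_f(x₀, ·) → ∞ along any divergent sequence. -/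

import Mathlib

/-!
A single shell already suffices: `x₀ ∈ K 0 ⊆ K i` and `u m ∉ K (i + 1)` for large `m` give
`d x₀ (u m) > 1 / (2 ε i)`, and `ε (i + 1) < ε i / 2` forces `ε i → 0`, so these bounds are unbounded.
-/

open Filter Topology

lemma le_mul_half_pow_of_le_half {ε : ℕ → ℝ} (hhalf : ∀ i, ε (i + 1) ≤ ε i / 2) (i : ℕ) :
    ε i ≤ ε 0 * (1 / 2) ^ i := by
  induction i with
  | zero => simp
  | succ i ih =>
    calc ε (i + 1) ≤ ε i / 2 := hhalf i
      _ ≤ ε 0 * (1 / 2) ^ i / 2 := by gcongr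
      _ = ε 0 * (1 / 2) ^ (i + 1) := by ring

lemma tendsto_zero_of_le_half {ε : ℕ → ℝ} (hpos : ∀ i, 0 < ε i)
    (hhalf : ∀ i, ε (i + 1) ≤ ε i / 2) : Tendsto ε atTop (𝓝 0) := by
  have hgeom : Tendsto (fun i => ε 0 * (1 / 2 : ℝ) ^ i) atTop (𝓝 0) := by
    simpa using (tendsto_pow_atTop_nhds_zero_of_lt_one (r := (1 / 2 : ℝ)) (by norm_num)
      (by norm_num)).const_mul (ε 0)
  exact squeeze_zero (fun i => (hpos i).le) (le_mul_half_pow_of_le_half hhalf) hgeom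

lemma tendsto_one_div_two_mul_atTop {ε : ℕ → ℝ} (hpos : ∀ i, 0 < ε i)
    (hε : Tendsto ε atTop (𝓝 0)) : Tendsto (fun i => 1 / (2 * ε i)) atTop atTop := by
  have h2ε : Tendsto (fun i => 2 * ε i) atTop (𝓝[>] 0) :=
    tendsto_nhdsWithin_of_tendsto_nhds_of_eventually_within _
      (by simpa using hε.const_mul 2) (Eventually.of_forall fun i => by simpa using hpos i)
  simp only [one_div]
  exact h2ε.inv_tendsto_nhdsGT_zero

lemma monotone_of_subset_interior_succ {X : Type*} [TopologicalSpace X] {K : ℕ → Set X}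
    (hK : ∀ i, K i ⊆ interior (K (i + 1))) : Monotone K :=
  monotone_nat_of_le_succ fun i => (hK i).trans interior_subset

lemma tendsto_atTop_of_shell_bound {X : Type*} {d : X → X → ℝ} {K : ℕ → Set X} {b : ℕ → ℝ}
    (hK : Monotone K) (hb : Tendsto b atTop atTop)
    (hshell : ∀ i, ∀ x ∈ K i, ∀ y ∉ K (i + 1), b i < d x y)
    {x₀ : X} (hx₀ : x₀ ∈ K 0) {u : ℕ → X} (hu : ∀ i, ∀ᶠ m in atTop, u m ∉ K i) :
    Tendsto (fun m => d x₀ (u m)) atTop atTop := by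
  refine tendsto_atTop.2 fun M => ?_
  obtain ⟨i, hi⟩ := (tendsto_atTop.1 hb M).exists
  filter_upwards [hu (i + 1)] with m hm
  exact hi.trans (hshell i x₀ (hK (Nat.zero_le i) hx₀) (u m) hm).le

theorem stmt_5_general {X : Type*} [MetricSpace X]
    (d : X → X → ℝ)
    (K : ℕ → Set X) (ε : ℕ → ℝ)
    (hKmono : ∀ i, K i ⊆ interior (K (i + 1)))
    (hεpos : ∀ i, 0 < ε i) (hεhalf : ∀ i, ε (i + 1) < ε i / 2)
    (hshell : ∀ i, ∀ x ∈ K i, ∀ y ∉ K (i + 1), d x y > 1 / (2 * ε i)) :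
    ∀ x₀ ∈ K 0, ∀ u : ℕ → X,
      (∀ i, ∀ᶠ m in Filter.atTop, u m ∉ K i) →
      Filter.Tendsto (fun m => d x₀ (u m)) Filter.atTop Filter.atTop := by
  intro x₀ hx₀ u hu
  have hε : Tendsto ε atTop (𝓝 0) := tendsto_zero_of_le_half hεpos fun i => (hεhalf i).le
  exact tendsto_atTop_of_shell_bound (monotone_of_subset_interior_succ hKmono)
    (tendsto_one_div_two_mul_atTop hεpos hε) hshell hx₀ hu

/-- Completeness of the induced pseudometric: if `dist_f (K_{i-1}, X \ K_i) > 1/(2 ε_{i-1})`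
for an exhaustion by compacts with `ε_i` decreasing, `ε_{i+1} < ε_i/2`, and `Σ 1/ε_i = ∞`,
then `dist_f (x₀, ·) → ∞` along any divergent sequence (one eventually leaving every `K_i`). -/
theorem stmt_5 {X : Type*} [MetricSpace X] (n : ℕ)
    (d : X → X → ℝ)
    (hd_nonneg : ∀ x y, 0 ≤ d x y) (hd_self : ∀ x, d x x = 0)
    (hd_symm : ∀ x y, d x y = d y x)
    (hd_tri : ∀ x y z, d x z ≤ d x y + d y z)
    (K : ℕ → Set X) (ε : ℕ → ℝ)
    (hKcpt : ∀ i, IsCompact (K i))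
    (hKmono : ∀ i, K i ⊆ interior (K (i + 1)))
    (hexh : (⋃ i, K i) = Set.univ)
    (hεpos : ∀ i, 0 < ε i) (hεhalf : ∀ i, ε (i + 1) < ε i / 2)
    (hdiv : ¬ Summable (fun i => 1 / ε i) ∨ Filter.Tendsto
      (fun N => ∑ i ∈ Finset.range N, 1 / ε i) Filter.atTop Filter.atTop)
    (hshell : ∀ i, ∀ x ∈ K i, ∀ y ∉ K (i + 1), d x y > 1 / (2 * ε i)) :
    ∀ x₀ ∈ K 0, ∀ u : ℕ → X,
      (∀ i, ∀ᶠ m in Filter.atTop, u m ∉ K i) →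
      Filter.Tendsto (fun m => d x₀ (u m)) Filter.atTop Filter.atTop :=
  stmt_5_general d K ε hKmono hεpos hεhalf hshell
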